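/- Let E be a Tychonoff space such that ℝ (with the euclidean topology) is E-compact, and let X be a nonempty E-completely regular space. Let v_E X denote the Hewitt E-compact extension of X, concretely realized as the closure of the image of the evaluation map X → E^{C(X,E)}. Then X is strongly zero-dimensional if and only if v_E X is strongly zero-dimensional. -/
import Mathlib


open Topology TopologicalSpace Set

universe u v

/-- `X` is `E`-completely regular if it is homeomorphic to a subspace of a power
`E^J` for some nonempty index set `J`. -/
def IsECompletelyRegular (E : Type u) (X : Type v)
    [TopologicalSpace E] [TopologicalSpace X] : Prop :=
  ∃ (J : Type (max u v)) (_ : Nonempty J) (e : X → J → E), IsEmbedding e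

/-- `X` is `E`-compact if it is homeomorphic to a closed subspace of a power `E^J`
for some nonempty index set `J`. -/
def IsECompact (E : Type u) (X : Type v)
    [TopologicalSpace E] [TopologicalSpace X] : Prop :=
  ∃ (J : Type (max u v)) (_ : Nonempty J) (e : X → J → E),
    IsEmbedding e ∧ IsClosed (Set.range e)

/-- A space is strongly zero-dimensional if any two disjoint zero-sets can be
separated by a clopen set. -/
def StronglyZeroDimensional (Y : Type*) [TopologicalSpace Y] : Prop :=
  ∀ f g : Y → ℝ, Continuous f → Continuous g → Disjoint (f ⁻¹' {0}) (g ⁻¹' {0}) →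
    ∃ U : Set Y, IsClopen U ∧ f ⁻¹' {0} ⊆ U ∧ Disjoint U (g ⁻¹' {0})

/-- The evaluation map `x ↦ (f ↦ f x)` from `X` into `E^{C(X,E)}`; the Hewitt
`E`-compact extension `v_E X` is realized concretely as the closure of its range. -/
def contEval (E : Type u) (X : Type v) [TopologicalSpace E] [TopologicalSpace X] :
    X → (C(X, E) → E) := fun x f => f x

section Aux

variable {E : Type u} {X : Type v} [TopologicalSpace E] [TopologicalSpace X]

lemma contEval_continuous : Continuous (contEval E X) :=
  continuous_pi fun f => f.continuous

/-- The evaluation map, with codomain restricted to the Hewitt extension. -/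
noncomputable def cEval (E : Type u) (X : Type v) [TopologicalSpace E] [TopologicalSpace X] :
    X → ↥(closure (Set.range (contEval E X))) :=
  fun x => ⟨contEval E X x, subset_closure (Set.mem_range_self x)⟩

lemma cEval_continuous : Continuous (cEval E X) :=
  contEval_continuous.subtype_mk _

lemma cEval_denseRange : Dense (Set.range (cEval E X)) := by
  intro p
  rw [closure_subtype, ← Set.range_comp]
  exact p.2

/-- Every continuous real-valued map on `X` extends over the Hewitt `E`-compact
extension, provided `ℝ` is `E`-compact. -/
lemma contEval_extension (hR : IsECompact E ℝ) (φ : X → ℝ) (hφ : Continuous φ) :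
    ∃ Φ : ↥(closure (Set.range (contEval E X))) → ℝ, Continuous Φ ∧
      ∀ x : X, Φ (cEval E X x) = φ x := by
  classical
  obtain ⟨J, ⟨j0⟩, jm, hjemb, hjcl⟩ := hR
  set F : ↥(closure (Set.range (contEval E X))) → (J → E) := fun p i =>
    (p : C(X, E) → E) ⟨fun x => jm (φ x) i,
      ((continuous_apply i).comp hjemb.continuous).comp hφ⟩ with hF
  have hFc : Continuous F :=
    continuous_pi fun i => (continuous_apply _).comp continuous_subtype_val
  have hFcE : ∀ x, F (cEval E X x) = jm (φ x) := fun x => rfl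
  have hrange : ∀ p, F p ∈ Set.range jm := by
    have hcl : IsClosed (F ⁻¹' Set.range jm) := hjcl.preimage hFc
    have hsub : Set.range (cEval E X) ⊆ F ⁻¹' Set.range jm := by
      rintro _ ⟨x, rfl⟩
      exact ⟨φ x, (hFcE x).symm⟩
    intro p
    exact closure_minimal hsub hcl (cEval_denseRange p)
  refine ⟨fun p => Function.invFun jm (F p), ?_, ?_⟩
  · have hjΦ : jm ∘ (fun p => Function.invFun jm (F p)) = F :=
      funext fun p => Function.invFun_eq (hrange p)
    refine hjemb.toIsInducing.continuous_iff.mpr ?_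
    rw [hjΦ]
    exact hFc
  · intro x
    apply hjemb.injective
    rw [Function.invFun_eq (hrange _), hFcE]

end Aux

/-- Let `E` be a Tychonoff space such that `ℝ` is `E`-compact, and let `X` be a
nonempty `E`-completely regular space.  Then `X` is strongly zero-dimensional if and
only if its Hewitt `E`-compact extension `v_E X` (the closure of the image of the
evaluation map `X → E^{C(X,E)}`) is strongly zero-dimensional. -/
theorem stmt8 {E : Type u} {X : Type v} [TopologicalSpace E] [TopologicalSpace X]
    [T1Space E] [CompletelyRegularSpace E] [Nonempty X]
    (hR : IsECompact E ℝ) (hX : IsECompletelyRegular E X) :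
    StronglyZeroDimensional X ↔
      StronglyZeroDimensional ↥(closure (Set.range (contEval E X))) := by
  classical
  constructor
  · -- X strongly zero-dimensional ⟹ v_E X strongly zero-dimensional
    intro hszd f g hf hg hdisj
    -- the separating function α = |f|/(|f|+|g|)
    have hpos : ∀ p, 0 < |f p| + |g p| := by
      intro p
      rcases eq_or_ne (f p) 0 with h | h
      · have hg0 : g p ≠ 0 := fun h' =>
          Set.disjoint_left.mp hdisj (by simpa using h) (by simpa using h')
        have := abs_pos.mpr hg0
        have := abs_nonneg (f p)
        linarith
      · have := abs_pos.mpr h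
        have := abs_nonneg (g p)
        linarith
    set α : ↥(closure (Set.range (contEval E X))) → ℝ :=
      fun p => |f p| / (|f p| + |g p|) with hα
    have hαc : Continuous α := (hf.abs.div (hf.abs.add hg.abs)) fun p => (hpos p).ne'
    have hα0 : ∀ p, f p = 0 → α p = 0 := fun p h => by simp [hα, h]
    have hα1 : ∀ p, g p = 0 → α p = 1 := by
      intro p h
      have hf0 : f p ≠ 0 := fun h' =>
        Set.disjoint_left.mp hdisj (by simpa using h') (by simpa using h)
      show |f p| / (|f p| + |g p|) = 1
      rw [h, abs_zero, add_zero, div_self (abs_ne_zero.mpr hf0)]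
    -- apply strong zero-dimensionality of X
    set a : X → ℝ := fun x => max (α (cEval E X x) - 1/3) 0 with ha
    set b : X → ℝ := fun x => max (2/3 - α (cEval E X x)) 0 with hb
    have hac : Continuous a :=
      (((hαc.comp cEval_continuous).sub continuous_const).max continuous_const)
    have hbc : Continuous b :=
      ((continuous_const.sub (hαc.comp cEval_continuous)).max continuous_const)
    have hamem : ∀ x, a x = 0 ↔ α (cEval E X x) ≤ 1/3 := by
      intro x
      have hax : a x = max (α (cEval E X x) - 1/3) 0 := rfl
      rw [hax, max_eq_right_iff]
      constructor <;> intro <;> linarith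
    have hbmem : ∀ x, b x = 0 ↔ 2/3 ≤ α (cEval E X x) := by
      intro x
      have hbx : b x = max (2/3 - α (cEval E X x)) 0 := rfl
      rw [hbx, max_eq_right_iff]
      constructor <;> intro <;> linarith
    obtain ⟨U, hU, hU1, hU2⟩ := hszd a b hac hbc (by
      rw [Set.disjoint_left]
      intro x hxa hxb
      rw [Set.mem_preimage, Set.mem_singleton_iff] at hxa hxb
      rw [hamem] at hxa
      rw [hbmem] at hxb
      linarith)
    -- the characteristic function of U and its extension
    set χ : X → ℝ := fun x => if x ∈ U then 1 else 0 with hχ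
    have hχc : Continuous χ := by
      refine Continuous.if ?_ continuous_const continuous_const
      intro x hx
      rw [show {x | x ∈ U} = U from rfl, hU.frontier_eq] at hx
      exact absurd hx (Set.notMem_empty x)
    obtain ⟨h, hhc, hhx⟩ := contEval_extension hR χ hχc
    have hmem : ∀ p, h p = 0 ∨ h p = 1 := by
      have hcl : IsClosed (h ⁻¹' {0, 1} : Set _) := by
        refine IsClosed.preimage hhc ?_
        rw [Set.insert_eq]
        exact isClosed_singleton.union isClosed_singleton
      have hsub : Set.range (cEval E X) ⊆ h ⁻¹' {0, 1} := by
        rintro _ ⟨x, rfl⟩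
        rw [Set.mem_preimage, hhx, hχ]
        by_cases hx : x ∈ U <;> simp [hx]
      intro p
      have := closure_minimal hsub hcl (cEval_denseRange p)
      simpa using this
    refine ⟨h ⁻¹' {1}, ⟨isClosed_singleton.preimage hhc, ?_⟩, ?_, ?_⟩
    · -- openness
      have : h ⁻¹' {1} = h ⁻¹' Set.Ioi (1/2) := by
        ext p
        simp only [Set.mem_preimage, Set.mem_singleton_iff, Set.mem_Ioi]
        constructor
        · intro h1; rw [h1]; norm_num
        · intro h1
          rcases hmem p with h0 | h1'
          · rw [h0] at h1; norm_num at h1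
          · exact h1'
      rw [this]
      exact isOpen_Ioi.preimage hhc
    · -- Z(f) ⊆ V
      intro p hp
      rw [Set.mem_preimage, Set.mem_singleton_iff] at hp ⊢
      by_contra hne
      have hp0 : h p = 0 := (hmem p).resolve_right hne
      have hWo : IsOpen (h ⁻¹' Set.Iio (1/2) ∩ α ⁻¹' Set.Iio (1/3)) :=
        (isOpen_Iio.preimage hhc).inter (isOpen_Iio.preimage hαc)
      have hWp : p ∈ h ⁻¹' Set.Iio (1/2) ∩ α ⁻¹' Set.Iio (1/3) := by
        constructor
        · rw [Set.mem_preimage, Set.mem_Iio, hp0]; norm_num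
        · rw [Set.mem_preimage, Set.mem_Iio, hα0 p hp]; norm_num
      obtain ⟨q, hq1, hq2⟩ := cEval_denseRange.inter_open_nonempty _ hWo ⟨p, hWp⟩
      obtain ⟨x, rfl⟩ := hq2
      have hxU : x ∈ U := by
        apply hU1
        rw [Set.mem_preimage, Set.mem_singleton_iff, hamem]
        have := hq1.2
        rw [Set.mem_preimage, Set.mem_Iio] at this
        linarith
      have := hq1.1
      rw [Set.mem_preimage, Set.mem_Iio, hhx, hχ] at this
      simp only [hxU, if_true] at this
      norm_num at this
    · -- V disjoint from Z(g)
      rw [Set.disjoint_left]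
      intro p hp hpg
      rw [Set.mem_preimage, Set.mem_singleton_iff] at hp hpg
      have hWo : IsOpen (h ⁻¹' Set.Ioi (1/2) ∩ α ⁻¹' Set.Ioi (2/3)) :=
        (isOpen_Ioi.preimage hhc).inter (isOpen_Ioi.preimage hαc)
      have hWp : p ∈ h ⁻¹' Set.Ioi (1/2) ∩ α ⁻¹' Set.Ioi (2/3) := by
        constructor
        · rw [Set.mem_preimage, Set.mem_Ioi, hp]; norm_num
        · rw [Set.mem_preimage, Set.mem_Ioi, hα1 p hpg]; norm_num
      obtain ⟨q, hq1, hq2⟩ := cEval_denseRange.inter_open_nonempty _ hWo ⟨p, hWp⟩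
      obtain ⟨x, rfl⟩ := hq2
      have hxU : x ∈ U := by
        have := hq1.1
        rw [Set.mem_preimage, Set.mem_Ioi, hhx, hχ] at this
        by_contra hxU
        simp only [hxU, if_false] at this
        norm_num at this
      have hxb : x ∈ b ⁻¹' {0} := by
        rw [Set.mem_preimage, Set.mem_singleton_iff, hbmem]
        have := hq1.2
        rw [Set.mem_preimage, Set.mem_Ioi] at this
        linarith
      exact Set.disjoint_left.mp hU2 hxU hxb
  · -- v_E X strongly zero-dimensional ⟹ X strongly zero-dimensional
    intro hszd f g hf hg hdisj
    have hpos : ∀ x, 0 < |f x| + |g x| := by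
      intro x
      rcases eq_or_ne (f x) 0 with h | h
      · have hg0 : g x ≠ 0 := fun h' =>
          Set.disjoint_left.mp hdisj (by simpa using h) (by simpa using h')
        have := abs_pos.mpr hg0
        have := abs_nonneg (f x)
        linarith
      · have := abs_pos.mpr h
        have := abs_nonneg (g x)
        linarith
    set φ : X → ℝ := fun x => |f x| / (|f x| + |g x|) with hφ
    have hφc : Continuous φ := (hf.abs.div (hf.abs.add hg.abs)) fun x => (hpos x).ne'
    obtain ⟨Φ, hΦc, hΦx⟩ := contEval_extension hR φ hφc
    obtain ⟨V, hV, hV1, hV2⟩ := hszd Φ (fun p => Φ p - 1) hΦc (hΦc.sub continuous_const) (by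
      rw [Set.disjoint_left]
      intro p hp1 hp2
      rw [Set.mem_preimage, Set.mem_singleton_iff] at hp1 hp2
      rw [hp1] at hp2
      norm_num at hp2)
    refine ⟨cEval E X ⁻¹' V, hV.preimage cEval_continuous, ?_, ?_⟩
    · intro x hx
      rw [Set.mem_preimage, Set.mem_singleton_iff] at hx
      apply hV1
      rw [Set.mem_preimage, Set.mem_singleton_iff, hΦx, hφ]
      simp [hx]
    · rw [Set.disjoint_left]
      intro x hxV hxg
      rw [Set.mem_preimage, Set.mem_singleton_iff] at hxg
      have hf0 : f x ≠ 0 := fun h' =>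
        Set.disjoint_left.mp hdisj (by simpa using h') (by simpa using hxg)
      have hΦ1 : Φ (cEval E X x) - 1 = 0 := by
        rw [hΦx, hφ]
        simp only
        rw [hxg, abs_zero, add_zero, div_self (abs_ne_zero.mpr hf0)]
        norm_num
      exact Set.disjoint_left.mp hV2 (Set.mem_preimage.mp hxV)
        (by rw [Set.mem_preimage, Set.mem_singleton_iff]; exact hΦ1)
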